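/- Let x₁,…,x_r be the r-tuples of distinct (r+k)-th roots of unity written as x_j = exp(2πi n_j/(r+k)) with 0 ≤ n_r < … < n₁ < r+k. Then for the Schur polynomial s_λ with λ ∈ P_{r,k}, one has s_λ(x₁,…,x_r) = det(x_i^{λ^j + r−j}) / Π_{i<j}(x_i − x_j), and s_{λ*}(x₁,…,x_r) = \overline{s_λ(x₁,…,x_r)} · (x₁⋯x_r)^k, where λ* is the conjugate partition (k−λ^r,…,k−λ¹). -/

import Mathlib

/-!
Write `p = x₁⋯x_r` and `m = r + k`. Since `conj xᵢ = xᵢ⁻¹ = xᵢ · xᵢ^(m-1)`, conjugating an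
alternant `det (xᵢ^{eⱼ})` with all `eⱼ < m` gives `p · det (xᵢ^{m-1-eⱼ})`, and for the exponents
`λ + δ` of `λ ∈ P_{r,k}` the exponents `m - 1 - (λ + δ)` are those of `λ*` in reverse order.
So `conj a_{λ+δ} = p · sign(rev) · a_{λ*+δ}`. The Vandermonde denominator is the alternant of the
empty partition, whose conjugate is the full `r × k` box with alternant `p^k · a_δ`; dividing the
two identities gives the theorem.
-/

open Finset Complex

/-- `l ∈ P_{r,k}`: a Young diagram with at most `r` rows and at most `k` columns. -/
def InBox (r k : ℕ) (l : Fin r → ℕ) : Prop :=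
  (∀ i, l i ≤ k) ∧ ∀ i j : Fin r, i ≤ j → l j ≤ l i

/-- The conjugate partition `λ* = (k − λ^r, …, k − λ¹)` in `P_{r,k}`. -/
def conjPartition (r k : ℕ) (l : Fin r → ℕ) : Fin r → ℕ :=
  fun i => k - l (Fin.rev i)

/-- The Schur polynomial of `λ`, evaluated at `x₁, …, x_r`, via the bialternant
formula `s_λ(x) = det(x_i^{λ^j + r − j}) / ∏_{i<j}(x_i − x_j)`. -/
noncomputable def schurEval (r : ℕ) (l : Fin r → ℕ) (x : Fin r → ℂ) : ℂ :=
  (Matrix.of fun i j : Fin r => x i ^ (l j + (r - 1 - (j : ℕ)))).det /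
    ∏ i, ∏ j ∈ Finset.univ.filter (fun j : Fin r => i < j), (x i - x j)

open scoped ComplexConjugate

section Alternant

variable {R : Type*} [CommRing R] {r : ℕ}

def alternant (x : Fin r → R) (e : Fin r → ℕ) : R :=
  (Matrix.of fun i j => x i ^ e j).det

theorem alternant_comp_perm (x : Fin r → R) (e : Fin r → ℕ) (σ : Equiv.Perm (Fin r)) :
    alternant x (e ∘ σ) = Equiv.Perm.sign σ * alternant x e :=
  Matrix.det_permute' σ (Matrix.of fun i j => x i ^ e j)

theorem alternant_const_add (x : Fin r → R) (e : Fin r → ℕ) (k : ℕ) :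
    alternant x (fun j => k + e j) = (∏ i, x i) ^ k * alternant x e := by
  rw [← prod_pow, alternant, alternant, ← Matrix.det_mul_column]
  simp only [Matrix.of_apply, pow_add]

theorem alternant_eq_prod_sub (x : Fin r → R) :
    alternant x (fun j => r - 1 - j) =
      ∏ i, ∏ j ∈ univ.filter (fun j : Fin r => i < j), (x i - x j) := by
  simp only [filter_lt_eq_Ioi, alternant]
  convert Matrix.det_projVandermonde (fun _ => (1 : R)) x using 2
  · ext i j
    rw [Matrix.of_apply, Matrix.projVandermonde_apply, one_pow, one_mul, Fin.val_rev]
    congr 1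
    omega
  · simp

end Alternant

theorem conj_pow_of_pow_eq_one {z : ℂ} {m a : ℕ} (hz : z ^ m = 1) (ha : a < m) :
    conj (z ^ a) = z * z ^ (m - 1 - a) := by
  rw [map_pow, ← inv_eq_conj (norm_eq_one_of_pow_eq_one hz (by omega)), inv_pow, ← pow_succ']
  refine inv_eq_of_mul_eq_one_left ?_
  rw [← pow_add, show m - 1 - a + 1 + a = m by omega, hz]

theorem conj_alternant {r m : ℕ} {x : Fin r → ℂ} (hx : ∀ i, x i ^ m = 1) {e : Fin r → ℕ}
    (he : ∀ j, e j < m) :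
    conj (alternant x e) = (∏ i, x i) * alternant x (fun j => m - 1 - e j) := by
  rw [alternant, alternant, RingHom.map_det, ← Matrix.det_mul_column]
  congr 1
  ext i j
  exact conj_pow_of_pow_eq_one (hx i) (he j)

/-- The exponents `λ + δ`, `δ = (r - 1, …, 1, 0)`, of the numerator in the bialternant formula. -/
def schurExponent (r : ℕ) (l : Fin r → ℕ) (j : Fin r) : ℕ :=
  l j + (r - 1 - j)

theorem schurEval_eq (r : ℕ) (l : Fin r → ℕ) (x : Fin r → ℂ) :
    schurEval r l x = alternant x (schurExponent r l) /
      ∏ i, ∏ j ∈ univ.filter (fun j : Fin r => i < j), (x i - x j) :=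
  rfl

theorem schurExponent_conjPartition_rev {r k : ℕ} {l : Fin r → ℕ} (hl : ∀ j, l j ≤ k) :
    schurExponent r (conjPartition r k l) ∘ Fin.revPerm =
      fun j => r + k - 1 - schurExponent r l j := by
  ext j
  have := hl j
  have := j.isLt
  simp only [Function.comp_apply, Fin.revPerm_apply, schurExponent, conjPartition, Fin.rev_rev,
    Fin.val_rev]
  omega

theorem conj_alternant_schurExponent {r k : ℕ} {l : Fin r → ℕ} (hl : ∀ j, l j ≤ k)
    {x : Fin r → ℂ} (hx : ∀ i, x i ^ (r + k) = 1) :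
    conj (alternant x (schurExponent r l)) =
      (∏ i, x i) * Equiv.Perm.sign (Fin.revPerm : Equiv.Perm (Fin r)) *
        alternant x (schurExponent r (conjPartition r k l)) := by
  have he : ∀ j, schurExponent r l j < r + k := fun j => by
    have := hl j; have := j.isLt; unfold schurExponent; omega
  rw [conj_alternant hx he, ← schurExponent_conjPartition_rev hl, alternant_comp_perm, mul_assoc]

theorem schurEval_conjPartition {r k : ℕ} {l : Fin r → ℕ} (hl : ∀ j, l j ≤ k)
    {x : Fin r → ℂ} (hx : ∀ i, x i ^ (r + k) = 1) :
    schurEval r (conjPartition r k l) x = conj (schurEval r l x) * (∏ i, x i) ^ k := by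
  set V := ∏ i, ∏ j ∈ univ.filter (fun j : Fin r => i < j), (x i - x j)
  set c := (∏ i, x i) * Equiv.Perm.sign (Fin.revPerm : Equiv.Perm (Fin r))
  have hp : ∏ i, x i ≠ 0 := prod_ne_zero_iff.2 fun i _ h => by
    simpa [h, zero_pow (show r + k ≠ 0 by have := i.isLt; omega)] using hx i
  have hc : c ≠ 0 := mul_ne_zero hp (by simp)
  have hV : conj V = c * ((∏ i, x i) ^ k * V) := by
    have hfull : schurExponent r (conjPartition r k fun _ => 0) =
        fun j => k + schurExponent r (fun _ => 0) j := by
      ext j; simp [schurExponent, conjPartition]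
    have hempty : schurExponent r (fun _ => 0) = fun j : Fin r => r - 1 - j := by
      ext j; simp [schurExponent]
    have h0 := conj_alternant_schurExponent (l := fun _ => 0) (fun _ => Nat.zero_le k) hx
    rwa [hfull, alternant_const_add, hempty, alternant_eq_prod_sub] at h0
  rw [schurEval_eq, schurEval_eq, map_div₀, conj_alternant_schurExponent hl hx, hV,
    mul_div_mul_left _ _ hc, div_mul_eq_mul_div, mul_comm _ V,
    mul_div_mul_right _ _ (pow_ne_zero k hp)]

theorem pow_eq_one_of_eq_exp {x : ℂ} {n m : ℕ}
    (hx : x = exp (2 * Real.pi * I * (n : ℂ) / (m : ℂ))) : x ^ m = 1 := by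
  rcases eq_or_ne m 0 with rfl | hm
  · exact pow_zero x
  rw [hx, ← exp_nat_mul, mul_div_cancel₀ _ (Nat.cast_ne_zero.2 hm), mul_comm,
    exp_nat_mul_two_pi_mul_I]

theorem schur_conjugate_on_roots_of_unity_general (r k : ℕ)
    (n : Fin r → ℕ)
    (l : Fin r → ℕ) (hbox : InBox r k l)
    (x : Fin r → ℂ)
    (hx : ∀ i, x i = Complex.exp (2 * Real.pi * Complex.I * (n i : ℂ) / ((r + k : ℕ) : ℂ))) :
    schurEval r l x =
      (Matrix.of fun i j : Fin r => x i ^ (l j + (r - 1 - (j : ℕ)))).det /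
        ∏ i, ∏ j ∈ Finset.univ.filter (fun j : Fin r => i < j), (x i - x j) ∧
    schurEval r (conjPartition r k l) x =
      (starRingEnd ℂ) (schurEval r l x) * (∏ i, x i) ^ k :=
  ⟨rfl, schurEval_conjPartition hbox.1 fun i => pow_eq_one_of_eq_exp (hx i)⟩

/-- For `x_j = exp(2πi n_j/(r+k))` an `r`-tuple of distinct `(r+k)`-th roots of unity
(`0 ≤ n_r < … < n₁ < r+k`) and `λ ∈ P_{r,k}`, one has the bialternant formula
`s_λ(x) = det(x_i^{λ^j+r−j})/∏_{i<j}(x_i − x_j)`, and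
`s_{λ*}(x) = conj(s_λ(x)) · (x₁⋯x_r)^k`. -/
theorem schur_conjugate_on_roots_of_unity (r k : ℕ) (hr : 0 < r) (hk : 0 < k)
    (n : Fin r → ℕ) (hanti : StrictAnti n) (hlt : ∀ i, n i < r + k)
    (l : Fin r → ℕ) (hbox : InBox r k l)
    (x : Fin r → ℂ)
    (hx : ∀ i, x i = Complex.exp (2 * Real.pi * Complex.I * (n i : ℂ) / ((r + k : ℕ) : ℂ))) :
    schurEval r l x =
      (Matrix.of fun i j : Fin r => x i ^ (l j + (r - 1 - (j : ℕ)))).det /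
        ∏ i, ∏ j ∈ Finset.univ.filter (fun j : Fin r => i < j), (x i - x j) ∧
    schurEval r (conjPartition r k l) x =
      (starRingEnd ℂ) (schurEval r l x) * (∏ i, x i) ^ k :=
  schur_conjugate_on_roots_of_unity_general r k n l hbox x hx
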